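/- arXiv:2004.11944 — 2 statements merged into one kernel-verified Lean document; each statement's English description precedes it below -/
import Mathlib

section
/- Every additive distance vector is Kalmanson: if d on [n] satisfies d(i,j) + d(k,l) ≤ max{d(i,k)+d(j,l), d(i,l)+d(j,k)} for all i,j,k,l, then there exists a circular order of [n] such that for every subsequence (i,j,k,l) of that order, max{d(i,j)+d(k,l), d(j,k)+d(i,l)} ≤ d(i,k)+d(j,l). -/
open Finset

namespace Stmt10Aux

variable {n : ℕ} [NeZero n]

/-- Pick an unused point maximizing `g x ·`. -/
noncomputable def pick (g : Fin n → Fin n → ℝ) (x : Fin n) (s : Finset (Fin n))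
    (h : sᶜ.Nonempty) : Fin n :=
  (Finset.exists_max_image sᶜ (g x) h).choose

lemma pick_mem (g : Fin n → Fin n → ℝ) (x : Fin n) (s : Finset (Fin n)) (h : sᶜ.Nonempty) :
    pick g x s h ∈ sᶜ :=
  (Finset.exists_max_image sᶜ (g x) h).choose_spec.1

lemma pick_max (g : Fin n → Fin n → ℝ) (x : Fin n) (s : Finset (Fin n)) (h : sᶜ.Nonempty) :
    ∀ y ∈ sᶜ, g x y ≤ g x (pick g x s h) :=
  (Finset.exists_max_image sᶜ (g x) h).choose_spec.2

/-- Greedy chain: `(current point, set of used points)`. -/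
noncomputable def F (g : Fin n → Fin n → ℝ) : ℕ → Fin n × Finset (Fin n)
  | 0 => (0, {0})
  | t+1 =>
    if h : ((F g t).2)ᶜ.Nonempty then
      (pick g (F g t).1 (F g t).2 h, insert (pick g (F g t).1 (F g t).2 h) (F g t).2)
    else F g t

lemma F_subset (g : Fin n → Fin n → ℝ) (t : ℕ) : (F g t).2 ⊆ (F g (t+1)).2 := by
  rw [F]
  split
  · exact subset_insert _ _
  · exact subset_rfl

lemma F_subset_le (g : Fin n → Fin n → ℝ) {a b : ℕ} (h : a ≤ b) :
    (F g a).2 ⊆ (F g b).2 := by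
  induction b with
  | zero => simpa [Nat.le_zero.mp h] using subset_rfl
  | succ b ih =>
    rcases Nat.eq_or_lt_of_le h with rfl | h'
    · exact subset_rfl
    · exact (ih (by omega)).trans (F_subset g b)

lemma F_fst_mem (g : Fin n → Fin n → ℝ) (t : ℕ) : (F g t).1 ∈ (F g t).2 := by
  induction t with
  | zero => simp [F]
  | succ t ih =>
    rw [F]
    split
    · exact mem_insert_self _ _
    · exact ih

lemma F_card (g : Fin n → Fin n → ℝ) : ∀ t, t < n → (F g t).2.card = t + 1 := by
  intro t
  induction t with
  | zero => intro _; simp [F]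
  | succ t ih =>
    intro ht
    have ihc := ih (by omega)
    have hne : (((F g t).2)ᶜ).Nonempty := by
      rw [← Finset.card_pos, Finset.card_compl, ihc, Fintype.card_fin]; omega
    rw [F, dif_pos hne,
      Finset.card_insert_of_notMem (Finset.mem_compl.mp (pick_mem g _ _ hne)), ihc]

lemma F_compl_nonempty (g : Fin n → Fin n → ℝ) {t : ℕ} (ht : t + 1 < n) :
    (((F g t).2)ᶜ).Nonempty := by
  rw [← Finset.card_pos, Finset.card_compl, F_card g t (by omega), Fintype.card_fin]; omega

lemma F_fst_notMem (g : Fin n → Fin n → ℝ) {b c : ℕ} (hbc : b < c) (hc : c < n) :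
    (F g c).1 ∉ (F g b).2 := by
  obtain ⟨c, rfl⟩ : ∃ c', c = c' + 1 := ⟨c - 1, by omega⟩
  have hne : (((F g c).2)ᶜ).Nonempty := F_compl_nonempty g hc
  rw [F, dif_pos hne]
  intro hmem
  exact (Finset.mem_compl.mp (pick_mem g _ _ hne))
    ((F_subset_le g (show b ≤ c by omega)) hmem)

lemma F_invariant (g : Fin n → Fin n → ℝ) (gsym : ∀ i j, g i j = g j i)
    (hyp : ∀ i j k, min (g i j) (g j k) ≤ g i k) :
    ∀ t, ∀ y, y ∉ (F g t).2 → ∀ s, s ≤ t → g ((F g s).1) y ≤ g ((F g t).1) y := by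
  intro t
  induction t with
  | zero =>
    intro y _ s hs
    rw [Nat.le_zero.mp hs]
  | succ t ih =>
    intro y hy s hs
    rcases Nat.eq_or_lt_of_le hs with rfl | hs'
    · exact le_rfl
    · have hs'' : s ≤ t := by omega
      by_cases hne : (((F g t).2)ᶜ).Nonempty
      · rw [F, dif_pos hne] at hy ⊢
        have hyt : y ∉ (F g t).2 := fun hm => hy (Finset.mem_insert_of_mem hm)
        have h1 : g ((F g s).1) y ≤ g ((F g t).1) y := ih y hyt s hs''
        have h2 : g ((F g t).1) y ≤ g ((F g t).1) (pick g (F g t).1 (F g t).2 hne) :=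
          pick_max g _ _ hne y (Finset.mem_compl.mpr hyt)
        have h3 := hyp y ((F g t).1) (pick g (F g t).1 (F g t).2 hne)
        have hxy : g y ((F g t).1) ≤ g ((F g t).1) (pick g (F g t).1 (F g t).2 hne) := by
          rw [gsym]; exact h2
        have h4 : g y ((F g t).1) ≤ g y (pick g (F g t).1 (F g t).2 hne) :=
          le_trans (le_of_eq (min_eq_left hxy).symm) h3
        have h5 : g ((F g t).1) y ≤ g (pick g (F g t).1 (F g t).2 hne) y := by
          rw [gsym ((F g t).1) y, gsym (pick g (F g t).1 (F g t).2 hne) y]; exact h4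
        exact h1.trans h5
      · rw [F, dif_neg hne] at hy ⊢
        exact ih y hy s hs''

lemma compat1 (g : Fin n → Fin n → ℝ) (gsym : ∀ i j, g i j = g j i)
    (hyp : ∀ i j k, min (g i j) (g j k) ≤ g i k)
    {a b c : ℕ} (hab : a < b) (hbc : b < c) (hc : c < n) :
    g ((F g a).1) ((F g c).1) ≤ g ((F g b).1) ((F g c).1) :=
  F_invariant g gsym hyp b ((F g c).1) (F_fst_notMem g hbc hc) a (le_of_lt hab)

lemma compat2 (g : Fin n → Fin n → ℝ) (gsym : ∀ i j, g i j = g j i)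
    (hyp : ∀ i j k, min (g i j) (g j k) ≤ g i k)
    {a b c : ℕ} (hab : a < b) (hbc : b < c) (hc : c < n) :
    g ((F g a).1) ((F g c).1) ≤ g ((F g a).1) ((F g b).1) := by
  have h1 := compat1 g gsym hyp hab hbc hc
  have h3 := hyp ((F g a).1) ((F g c).1) ((F g b).1)
  have hle : g ((F g a).1) ((F g c).1) ≤ g ((F g c).1) ((F g b).1) := by
    rw [gsym ((F g c).1) ((F g b).1)]; exact h1
  exact le_trans (le_of_eq (min_eq_left hle).symm) h3

end Stmt10Aux

/-- Every additive distance vector is Kalmanson: if d satisfies the four-point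
condition, then there is a circular order (given by a permutation σ of Fin n, read
cyclically) such that every quadruple in circular position satisfies the Kalmanson
inequality. -/
theorem stmt_10 (n : ℕ) (d : Fin n → Fin n → ℝ)
    (hsym : ∀ i j, d i j = d j i) (hnn : ∀ i j, 0 ≤ d i j)
    (hdiag : ∀ i, d i i = 0)
    (hadd : ∀ i j k l, d i j + d k l ≤ max (d i k + d j l) (d i l + d j k)) :
    ∃ σ : Equiv.Perm (Fin n), ∀ p q r s : Fin n, p < q → q < r → r < s →
      max (d (σ p) (σ q) + d (σ r) (σ s)) (d (σ q) (σ r) + d (σ p) (σ s)) ≤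
        d (σ p) (σ r) + d (σ q) (σ s) := by
  rcases Nat.eq_zero_or_pos n with rfl | hn
  · exact ⟨Equiv.refl _, fun p => p.elim0⟩
  haveI : NeZero n := ⟨hn.ne'⟩
  set g : Fin n → Fin n → ℝ := fun i j => d i 0 + d j 0 - d i j with hg
  have gsym : ∀ i j, g i j = g j i := by
    intro i j; simp only [hg]; rw [hsym i j]; ring
  have hyp : ∀ i j k, min (g i j) (g j k) ≤ g i k := by
    intro i j k
    rcases le_max_iff.mp (hadd i k j 0) with h | h
    · refine le_trans (min_le_left _ _) ?_
      simp only [hg]; linarith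
    · refine le_trans (min_le_right _ _) ?_
      simp only [hg]; have hs := hsym k j; linarith
  let f : Fin n → Fin n := fun t => (Stmt10Aux.F g t.1).1
  have key : ∀ a b : Fin n, a < b → f a ≠ f b := by
    intro a b h hEq
    have h1 : f a ∈ (Stmt10Aux.F g a.1).2 := Stmt10Aux.F_fst_mem g a.1
    have h2 : (Stmt10Aux.F g b.1).1 ∉ (Stmt10Aux.F g a.1).2 :=
      Stmt10Aux.F_fst_notMem g (show a.1 < b.1 from h) b.isLt
    exact h2 (show f b ∈ (Stmt10Aux.F g a.1).2 from hEq ▸ h1)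
  have hinj : Function.Injective f := by
    intro a b hab
    by_contra hne
    rcases lt_or_gt_of_ne hne with h | h
    · exact key a b h hab
    · exact key b a h hab.symm
  have hbij := Finite.injective_iff_bijective.mp hinj
  refine ⟨Equiv.ofBijective f hbij, ?_⟩
  intro p q r s hpq hqr hrs
  have hσ : ∀ t, (Equiv.ofBijective f hbij) t = f t := fun _ => rfl
  simp only [hσ]
  have hpq' : p.1 < q.1 := hpq
  have hqr' : q.1 < r.1 := hqr
  have hrs' : r.1 < s.1 := hrs
  have h1 := Stmt10Aux.compat2 g gsym hyp hpq' hqr' r.isLt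
  have h2 := Stmt10Aux.compat1 g gsym hyp hpq' hqr' r.isLt
  have h3 := Stmt10Aux.compat2 g gsym hyp hqr' hrs' s.isLt
  have h4 := Stmt10Aux.compat1 g gsym hyp hqr' hrs' s.isLt
  have h5 := Stmt10Aux.compat2 g gsym hyp (hpq'.trans hqr') hrs' s.isLt
  have h6 := Stmt10Aux.compat1 g gsym hyp (hpq'.trans hqr') hrs' s.isLt
  have h7 := Stmt10Aux.compat2 g gsym hyp hpq' (hqr'.trans hrs') s.isLt
  have h8 := Stmt10Aux.compat1 g gsym hyp hpq' (hqr'.trans hrs') s.isLt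
  have hyp1 := hyp ((Stmt10Aux.F g p.1).1) ((Stmt10Aux.F g r.1).1) ((Stmt10Aux.F g s.1).1)
  have hyp2 := hyp ((Stmt10Aux.F g p.1).1) ((Stmt10Aux.F g q.1).1) ((Stmt10Aux.F g s.1).1)
  show max (d ((Stmt10Aux.F g p.1).1) ((Stmt10Aux.F g q.1).1) +
      d ((Stmt10Aux.F g r.1).1) ((Stmt10Aux.F g s.1).1))
      (d ((Stmt10Aux.F g q.1).1) ((Stmt10Aux.F g r.1).1) +
      d ((Stmt10Aux.F g p.1).1) ((Stmt10Aux.F g s.1).1)) ≤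
      d ((Stmt10Aux.F g p.1).1) ((Stmt10Aux.F g r.1).1) +
      d ((Stmt10Aux.F g q.1).1) ((Stmt10Aux.F g s.1).1)
  simp only [hg] at h1 h2 h3 h4 h5 h6 h7 h8 hyp1 hyp2
  rw [max_le_iff]
  rcases min_le_iff.mp hyp1 with hA | hA <;> rcases min_le_iff.mp hyp2 with hB | hB <;>
    exact ⟨by linarith, by linarith⟩
end

section
/- Let S be a split system on [n] in which every split A|B has both parts contiguous with respect to a fixed circular order c, and let w assign a nonnegative weight to each split. Define d(i,j) = sum of w(A|B) over splits A|B of S separating i from j. Then d is Kalmanson with respect to c: for every quadruple (i,j,k,l) in circular position in c, max{d(i,j)+d(k,l), d(j,k)+d(i,l)} ≤ d(i,k)+d(j,l). -/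
/-!
The split metric is a nonnegative combination of the pseudometrics of its single splits, so it
suffices to check the Kalmanson inequalities for one split. For points `p, q, r, s` in cyclic
order, an arc cannot contain `p, r` and miss `q, s` (or vice versa), so no split with a contiguous
part separates `{p, r}` from `{q, s}`; for every other split the inequalities hold by inspection.
-/

/-- A subset of Fin n is contiguous (an arc) with respect to the circular order
given by a permutation σ, read cyclically. -/
def IsContiguous (n : ℕ) [NeZero n] (σ : Equiv.Perm (Fin n))
    (A : Finset (Fin n)) : Prop :=
  ∃ (a : Fin n) (m : ℕ),
    A = (Finset.range m).image (fun t : ℕ => σ (a + (Fin.ofNat n t : Fin n)))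

theorem Fin.val_sub_add_val {n : ℕ} (x a : Fin n) :
    (x - a).val + a.val = x.val ∨ (x - a).val + a.val = x.val + n := by
  rcases le_or_gt a x with h | h
  · left
    rw [Fin.coe_sub_iff_le.2 h]
    exact Nat.sub_add_cancel h
  · right
    rw [Fin.coe_sub_iff_lt.2 h]
    have : x.val < a.val := h
    omega

/-- `{x | (x - a).val < m}` is the arc of length `m` starting at `a`. -/
theorem Fin.not_alternating_val_sub_lt {n : ℕ} (a : Fin n) (m : ℕ) {p q r s : Fin n}
    (hpq : p < q) (hqr : q < r) (hrs : r < s) :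
    ¬((p - a).val < m ∧ m ≤ (q - a).val ∧ (r - a).val < m ∧ m ≤ (s - a).val) ∧
      ¬(m ≤ (p - a).val ∧ (q - a).val < m ∧ m ≤ (r - a).val ∧ (s - a).val < m) := by
  have hp := Fin.val_sub_add_val p a
  have hq := Fin.val_sub_add_val q a
  have hr := Fin.val_sub_add_val r a
  have hs := Fin.val_sub_add_val s a
  have : p.val < q.val := hpq
  have : q.val < r.val := hqr
  have : r.val < s.val := hrs
  have := s.isLt
  have := (p - a).isLt
  have := (s - a).isLt
  omega

theorem apply_mem_arc_iff {n : ℕ} [NeZero n] (σ : Equiv.Perm (Fin n)) (a : Fin n) (m : ℕ)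
    (x : Fin n) :
    σ x ∈ (Finset.range m).image (fun t : ℕ => σ (a + (Fin.ofNat n t : Fin n))) ↔
      (x - a).val < m := by
  simp only [Finset.mem_image, Finset.mem_range, σ.injective.eq_iff]
  constructor
  · rintro ⟨t, ht, rfl⟩
    rw [add_sub_cancel_left, Fin.val_ofNat]
    exact (Nat.mod_le t n).trans_lt ht
  · intro h
    exact ⟨(x - a).val, h, by rw [Fin.ofNat_val_eq_self, add_sub_cancel]⟩

theorem IsContiguous.not_alternating {n : ℕ} [NeZero n] {σ : Equiv.Perm (Fin n)}
    {A : Finset (Fin n)} (hA : IsContiguous n σ A) {p q r s : Fin n}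
    (hpq : p < q) (hqr : q < r) (hrs : r < s) :
    ¬(σ p ∈ A ∧ σ q ∉ A ∧ σ r ∈ A ∧ σ s ∉ A) ∧ ¬(σ p ∉ A ∧ σ q ∈ A ∧ σ r ∉ A ∧ σ s ∈ A) := by
  obtain ⟨a, m, rfl⟩ := hA
  simp only [apply_mem_arc_iff, not_lt]
  exact Fin.not_alternating_val_sub_lt a m hpq hqr hrs

def sepWeight {α : Type*} [DecidableEq α] (A : Finset α) (x : ℝ) (i j : α) : ℝ :=
  if (i ∈ A ↔ j ∈ A) then 0 else x

theorem sepWeight_kalmanson {α : Type*} [DecidableEq α] {A : Finset α} {x : ℝ} (hx : 0 ≤ x)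
    {i j k l : α}
    (h₁ : ¬(i ∈ A ∧ j ∉ A ∧ k ∈ A ∧ l ∉ A)) (h₂ : ¬(i ∉ A ∧ j ∈ A ∧ k ∉ A ∧ l ∈ A)) :
    max (sepWeight A x i j + sepWeight A x k l) (sepWeight A x j k + sepWeight A x i l) ≤
      sepWeight A x i k + sepWeight A x j l := by
  unfold sepWeight
  by_cases i ∈ A <;> by_cases j ∈ A <;> by_cases k ∈ A <;> by_cases l ∈ A <;> simp_all

theorem stmt_11_general (n : ℕ) [NeZero n] (σ : Equiv.Perm (Fin n))
    (S : Finset (Finset (Fin n))) (w : Finset (Fin n) → ℝ)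
    (hw : ∀ A ∈ S, 0 ≤ w A)
    (hcontig : ∀ A ∈ S, IsContiguous n σ A ∧ IsContiguous n σ Aᶜ)
    (d : Fin n → Fin n → ℝ)
    (hd : ∀ i j, d i j = ∑ A ∈ S, if ((i ∈ A) ↔ (j ∈ A)) then 0 else w A) :
    ∀ p q r s : Fin n, p < q → q < r → r < s →
      max (d (σ p) (σ q) + d (σ r) (σ s)) (d (σ q) (σ r) + d (σ p) (σ s)) ≤
        d (σ p) (σ r) + d (σ q) (σ s) := by
  intro p q r s hpq hqr hrs
  have hsplit : ∀ A ∈ S,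
      max (sepWeight A (w A) (σ p) (σ q) + sepWeight A (w A) (σ r) (σ s))
          (sepWeight A (w A) (σ q) (σ r) + sepWeight A (w A) (σ p) (σ s)) ≤
        sepWeight A (w A) (σ p) (σ r) + sepWeight A (w A) (σ q) (σ s) := fun A hA =>
    have ⟨h₁, h₂⟩ := (hcontig A hA).1.not_alternating hpq hqr hrs
    sepWeight_kalmanson (hw A hA) h₁ h₂
  have hd' : ∀ i j, d i j = ∑ A ∈ S, sepWeight A (w A) i j := hd
  simp only [hd', ← Finset.sum_add_distrib]
  exact max_le (Finset.sum_le_sum fun A hA => (le_max_left _ _).trans (hsplit A hA))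
    (Finset.sum_le_sum fun A hA => (le_max_right _ _).trans (hsplit A hA))

/-- If every split of a weighted split system S (each split encoded by one of its
parts A, with both A and its complement nonempty and contiguous in the circular
order σ) has nonnegative weight, then the induced split metric
d(i,j) = Σ_{A separates i,j} w(A) is Kalmanson with respect to σ. -/
theorem stmt_11 (n : ℕ) [NeZero n] (σ : Equiv.Perm (Fin n))
    (S : Finset (Finset (Fin n))) (w : Finset (Fin n) → ℝ)
    (hw : ∀ A ∈ S, 0 ≤ w A)
    (hparts : ∀ A ∈ S, A.Nonempty ∧ Aᶜ.Nonempty)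
    (hcontig : ∀ A ∈ S, IsContiguous n σ A ∧ IsContiguous n σ Aᶜ)
    (d : Fin n → Fin n → ℝ)
    (hd : ∀ i j, d i j = ∑ A ∈ S, if ((i ∈ A) ↔ (j ∈ A)) then 0 else w A) :
    ∀ p q r s : Fin n, p < q → q < r → r < s →
      max (d (σ p) (σ q) + d (σ r) (σ s)) (d (σ q) (σ r) + d (σ p) (σ s)) ≤
        d (σ p) (σ r) + d (σ q) (σ s) :=
  stmt_11_general n σ S w hw hcontig d hd
end
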